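/- Let T be a bidirected tree rooted at a vertex z, let r be a unimodal request and r' a converging request in T. Then r and r' do not interfere if and only if m_r is an ancestor of t_{r'} and t_r and s_{r'} are related. -/

import Mathlib

open SimpleGraph

/-- A request in a bidirected tree `T`: a directed path of length at least 1,
encoded as a path (walk without vertex repetition) in the underlying tree. -/
structure Request {V : Type*} (T : SimpleGraph V) where
  s : V
  t : V
  toWalk : T.Walk s t
  isPath : toWalk.IsPath
  one_le_length : 1 ≤ toWalk.length

namespace Request

variable {V : Type*} {T : SimpleGraph V}

/-- The second vertex `s_r⁺` of a request. -/
def sPlus (r : Request T) : V := r.toWalk.getVert 1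

/-- The penultimate vertex `t_r⁻` of a request. -/
def tMinus (r : Request T) : V := r.toWalk.getVert (r.toWalk.length - 1)

end Request

variable {V : Type*}

/-- `r` interferes on `r'` if the unique path from `s_r` to `t_{r'}` in the tree `T`
has first arc the emission arc of `r` and last arc the reception arc of `r'`. -/
def InterferesOn (T : SimpleGraph V) (r r' : Request T) : Prop :=
  ∃ p : T.Walk r.s r'.t, p.IsPath ∧ 1 ≤ p.length ∧
    p.getVert 1 = r.sPlus ∧ p.getVert (p.length - 1) = r'.tMinus

/-- Two requests interfere if one of them interferes on the other. -/
def Interfere (T : SimpleGraph V) (r r' : Request T) : Prop :=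
  InterferesOn T r r' ∨ InterferesOn T r' r

/-- `x` is an ancestor of `y` in the tree `T` rooted at `z`:
`x` lies on the unique path from `z` to `y`. -/
def Ancestor (T : SimpleGraph V) (z x y : V) : Prop :=
  ∃ p : T.Walk z y, p.IsPath ∧ x ∈ p.support

/-- Two vertices are related if one is an ancestor of the other. -/
def Related (T : SimpleGraph V) (z x y : V) : Prop :=
  Ancestor T z x y ∨ Ancestor T z y x

/-- A request is converging (w.r.t. root `z`) if all its arcs are directed towards `z`,
i.e. the head of every arc is an ancestor of its tail. -/
def Converging (T : SimpleGraph V) (z : V) (r : Request T) : Prop :=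
  ∀ i < r.toWalk.length, Ancestor T z (r.toWalk.getVert (i+1)) (r.toWalk.getVert i)

/-- A request is diverging (w.r.t. root `z`) if all its arcs are directed away from `z`,
i.e. the tail of every arc is an ancestor of its head. -/
def Diverging (T : SimpleGraph V) (z : V) (r : Request T) : Prop :=
  ∀ i < r.toWalk.length, Ancestor T z (r.toWalk.getVert i) (r.toWalk.getVert (i+1))

/-- A request is unimodal (w.r.t. root `z`) if it is neither converging nor diverging. -/
def Unimodal (T : SimpleGraph V) (z : V) (r : Request T) : Prop :=
  ¬ Converging T z r ∧ ¬ Diverging T z r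

/-- `m` is the middle of the request `r` (w.r.t. root `z`): the vertex of `r`
closest to the root, i.e. the vertex of `r` which is an ancestor of every vertex of `r`. -/
def IsMiddle (T : SimpleGraph V) (z : V) (r : Request T) (m : V) : Prop :=
  m ∈ r.toWalk.support ∧ ∀ y ∈ r.toWalk.support, Ancestor T z m y

/-- The interference graph of a family of requests: two (indices of) requests are
adjacent iff they are distinct and the requests interfere. -/
def interferenceGraph (T : SimpleGraph V) {ι : Type*} (f : ι → Request T) :
    SimpleGraph ι where
  Adj i j := i ≠ j ∧ Interfere T (f i) (f j)
  symm := by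
    constructor
    intro i j h
    exact ⟨h.1.symm, h.2.symm⟩
  loopless := by
    constructor
    intro i h
    exact h.1 rfl

/-- The interference graph of a set of requests. -/
def interGraph (T : SimpleGraph V) (R : Set (Request T)) : SimpleGraph ↥R :=
  interferenceGraph T (fun r => (r : Request T))

/-- The pair `(a, b)` is an arc joining two consecutive vertices of the
bidirected path corresponding to the walk `p` (in either direction). -/
def ArcOn (T : SimpleGraph V) {u v : V} (p : T.Walk u v) (a b : V) : Prop :=
  ∃ j < p.length, (p.getVert j = a ∧ p.getVert (j+1) = b) ∨
    (p.getVert j = b ∧ p.getVert (j+1) = a)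

/-- The request `r` shares an arc with the bidirected path corresponding to
the walk `p`. -/
def SharesArc (T : SimpleGraph V) {u v : V} (p : T.Walk u v) (r : Request T) : Prop :=
  ∃ i < r.toWalk.length, ArcOn T p (r.toWalk.getVert i) (r.toWalk.getVert (i+1))

/-- A leaf of a tree: a vertex with at most one neighbour. -/
def IsLeaf (T : SimpleGraph V) (y : V) : Prop :=
  {w | T.Adj y w}.Subsingleton

/-- A comparability graph: there is a partial order on the vertices such that
two distinct vertices are adjacent iff they are comparable. -/
def IsComparabilityGraph {α : Type*} (G : SimpleGraph α) : Prop :=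
  ∃ le : α → α → Prop, IsPartialOrder α le ∧ ∀ a b, G.Adj a b ↔ a ≠ b ∧ (le a b ∨ le b a)

/-- A cobipartite graph: the vertex set can be partitioned into two cliques. -/
def IsCobipartite {α : Type*} (G : SimpleGraph α) : Prop :=
  ∃ A : Set α, G.IsClique A ∧ G.IsClique Aᶜ

/-
In a tree rooted at `z` every path first ascends and then descends. Hence the emission arc of
the unimodal request `r` ascends and its reception arc descends, while every arc of the
converging request `r'` ascends. With these orientations, `r` interferes on `r'` iff `t_{r'}⁻`
is an ancestor of `s_r`, and `r'` interferes on `r` iff `s_{r'}` and `t_r` are unrelated.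
Finally `m_r` is the lowest common ancestor of `s_r` and `t_r`; once `s_{r'}` and `t_r` are
related, this makes `t_{r'}⁻` an ancestor of `s_r` exactly when `m_r` is not an ancestor of
`t_{r'}`.
-/

namespace SimpleGraph.IsAcyclic

variable {V : Type*} {T : SimpleGraph V} {x y : V}

theorem eq_of_isPath (hT : T.IsAcyclic) {p q : T.Walk x y} (hp : p.IsPath) (hq : q.IsPath) :
    p = q :=
  congrArg Subtype.val ((hT.subsingleton_path x y).elim ⟨p, hp⟩ ⟨q, hq⟩)

end SimpleGraph.IsAcyclic

section RootedTree

variable {V : Type*} {T : SimpleGraph V} {z u v w x y : V}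

theorem ancestor_iff_mem_support (hT : T.IsAcyclic) {p : T.Walk z y} (hp : p.IsPath) :
    Ancestor T z x y ↔ x ∈ p.support :=
  ⟨fun ⟨_, hq, hx⟩ => hT.eq_of_isPath hq hp ▸ hx, fun hx => ⟨p, hp, hx⟩⟩

theorem ancestor_refl (hT : T.Connected) (z y : V) : Ancestor T z y y :=
  have ⟨p, hp⟩ := (hT z y).exists_isPath
  ⟨p, hp, p.end_mem_support⟩

theorem ancestor_of_mem_support_dropUntil [DecidableEq V] {p : T.Walk z x} (hp : p.IsPath)
    (hw : w ∈ p.support) (hv : v ∈ (p.dropUntil w hw).support) : Ancestor T z w v := by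
  refine ⟨(p.takeUntil w hw).append ((p.dropUntil w hw).takeUntil v hv), ?_, by simp⟩
  have hsplit := p.take_spec hw
  rw [← (p.dropUntil w hw).take_spec hv, Walk.append_assoc] at hsplit
  exact (hsplit ▸ hp).of_append_left

namespace Ancestor

theorem trans (hT : T.IsAcyclic) (hxy : Ancestor T z x y) (hyw : Ancestor T z y w) :
    Ancestor T z x w := by
  classical
  obtain ⟨p, hp, hy⟩ := hyw
  have hx := (ancestor_iff_mem_support hT (hp.takeUntil hy)).1 hxy
  exact ⟨p, hp, p.support_takeUntil_subset_support hy hx⟩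

theorem antisymm (hT : T.IsAcyclic) (hxy : Ancestor T z x y) (hyx : Ancestor T z y x) : x = y := by
  classical
  obtain ⟨p, hp, hx⟩ := hxy
  have hy := (ancestor_iff_mem_support hT (hp.takeUntil hx)).1 hyx
  have hp' : (p.takeUntil x hx).takeUntil y hy = p :=
    hT.eq_of_isPath ((hp.takeUntil hx).takeUntil hy) hp
  have hle := (p.takeUntil x hx).length_takeUntil_le_length hy
  have hlen := congrArg Walk.length (p.take_spec hx)
  rw [hp'] at hle
  rw [Walk.length_append] at hlen
  exact Walk.eq_of_length_eq_zero (by omega : (p.dropUntil x hx).length = 0)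

end Ancestor

theorem related_comm : Related T z x y ↔ Related T z y x := or_comm

theorem related_of_ancestor (hT : T.IsAcyclic) (hxw : Ancestor T z x w) (hyw : Ancestor T z y w) :
    Related T z x y := by
  classical
  obtain ⟨p, hp, hy⟩ := hyw
  have hx := (ancestor_iff_mem_support hT hp).1 hxw
  rw [← p.take_spec hy, Walk.mem_support_append_iff] at hx
  rcases hx with hx | hx
  · exact Or.inl ⟨_, hp.takeUntil hy, hx⟩
  · exact Or.inr (ancestor_of_mem_support_dropUntil hp hy hx)

theorem Related.of_ancestor (hT : T.IsAcyclic) (huv : Related T z u v) (hxu : Ancestor T z x u)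
    (hyv : Ancestor T z y v) : Related T z x y := by
  rcases huv with huv | hvu
  · exact related_of_ancestor hT (hxu.trans hT huv) hyv
  · exact related_of_ancestor hT hxu (hyv.trans hT hvu)

theorem related_of_adj (hT : T.IsTree) (h : T.Adj u v) : Related T z u v := by
  obtain ⟨p, hp⟩ := (hT.existsUnique_path z v).exists
  by_cases hu : u ∈ p.support
  · exact Or.inl ⟨p, hp, hu⟩
  · exact Or.inr ⟨p.concat h.symm, hp.concat hu h.symm, by simp⟩

theorem eq_or_ancestor_of_adj (hT : T.IsAcyclic) (h : T.Adj u x) (hux : Ancestor T z u x)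
    (hwx : Ancestor T z w x) : w = x ∨ Ancestor T z w u := by
  classical
  obtain ⟨p, hp, hu⟩ := hux
  have hw := (ancestor_iff_mem_support hT hp).1 hwx
  have hdrop : p.dropUntil u hu = .cons h .nil :=
    hT.eq_of_isPath (hp.dropUntil hu) (Walk.IsPath.nil.cons (by simp [h.ne]))
  rw [← p.take_spec hu, Walk.mem_support_append_iff, hdrop] at hw
  rcases hw with hw | hw
  · exact Or.inr ⟨_, hp.takeUntil hu, hw⟩
  · simp only [Walk.support_cons, Walk.support_nil, List.mem_cons, List.not_mem_nil,
      or_false] at hw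
    rcases hw with rfl | rfl
    · exact Or.inr ⟨_, hp.takeUntil hu, Walk.end_mem_support _⟩
    · exact Or.inl rfl

theorem parent_unique (hT : T.IsAcyclic) (hu : T.Adj u x) (hux : Ancestor T z u x)
    (hv : T.Adj v x) (hvx : Ancestor T z v x) : u = v := by
  rcases eq_or_ancestor_of_adj hT hu hux hvx with h | hvu
  · exact absurd h hv.ne
  rcases eq_or_ancestor_of_adj hT hv hvx hux with h | huv
  · exact absurd h hu.ne
  exact huv.antisymm hT hvu

theorem child_unique_of_related (hT : T.IsAcyclic) (hu : T.Adj w u) (hwu : Ancestor T z w u)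
    (hv : T.Adj w v) (hwv : Ancestor T z w v) (huv : Related T z u v) : u = v := by
  rcases huv with huv | hvu
  · rcases eq_or_ancestor_of_adj hT hv hwv huv with h | huw
    · exact h
    · exact absurd (huw.antisymm hT hwu).symm hu.ne
  · rcases eq_or_ancestor_of_adj hT hu hwu hvu with h | hvw
    · exact h.symm
    · exact absurd (hvw.antisymm hT hwv).symm hv.ne

theorem ancestor_of_mem_support_of_ancestor (hT : T.IsAcyclic) (hwx : Ancestor T z w x)
    (hwy : Ancestor T z w y) {p : T.Walk x y} (hp : p.IsPath) (hv : v ∈ p.support) :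
    Ancestor T z w v := by
  classical
  obtain ⟨P, hP, hwP⟩ := hwx
  obtain ⟨Q, hQ, hwQ⟩ := hwy
  have hbypass : ((P.dropUntil w hwP).reverse.append (Q.dropUntil w hwQ)).bypass = p :=
    hT.eq_of_isPath (Walk.bypass_isPath _) hp
  rw [← hbypass] at hv
  have hv' := Walk.support_bypass_subset_support _ hv
  rw [Walk.mem_support_append_iff, Walk.support_reverse, List.mem_reverse] at hv'
  rcases hv' with hv' | hv'
  · exact ancestor_of_mem_support_dropUntil hP hwP hv'
  · exact ancestor_of_mem_support_dropUntil hQ hwQ hv'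

/-- A walk can only leave the subtree below `w` through the parent `u` of `w`. -/
theorem ancestor_of_not_mem_support (hT : T.IsTree) (hu : T.Adj u w) (huw : Ancestor T z u w) :
    ∀ {x y : V} (p : T.Walk x y), Ancestor T z w x → u ∉ p.support → Ancestor T z w y
  | _, _, .nil, hwx, _ => hwx
  | _, _, .cons h p, hwx, hup => by
    rw [Walk.support_cons, List.mem_cons, not_or] at hup
    refine ancestor_of_not_mem_support hT hu huw p ?_ hup.2
    rcases related_of_adj hT h with hxx' | hx'x
    · exact hwx.trans hT.isAcyclic hxx'
    rcases eq_or_ancestor_of_adj hT.isAcyclic h.symm hx'x hwx with rfl | hwx'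
    · exact absurd (parent_unique hT.isAcyclic hu huw h.symm hx'x ▸ p.start_mem_support) hup.2
    · exact hwx'

end RootedTree

namespace SimpleGraph.Walk.IsPath

variable {V : Type*} {T : SimpleGraph V} {z x y : V} {p : T.Walk x y}

theorem ancestor_of_ancestor_snd (hT : T.IsTree) (hp : p.IsPath)
    (h : Ancestor T z x p.snd) : Ancestor T z p.snd y := by
  cases p with
  | nil => exact h
  | cons hadj q =>
    simp only [Walk.snd_cons] at h ⊢
    exact ancestor_of_not_mem_support hT hadj h q (ancestor_refl hT.connected z _)
      ((Walk.cons_isPath_iff hadj q).1 hp).2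

theorem snd_ancestor_of_not_ancestor (hT : T.IsTree) (hp : p.IsPath)
    (h : ¬ Ancestor T z x y) : Ancestor T z p.snd x := by
  have hne : ¬ p.Nil := fun hnil => h (hnil.eq ▸ ancestor_refl hT.connected z x)
  refine (related_of_adj hT (p.adj_snd hne)).resolve_left fun hx => h ?_
  exact hx.trans hT.isAcyclic (hp.ancestor_of_ancestor_snd hT hx)

theorem penultimate_ancestor_of_ancestor_penultimate (hT : T.IsTree) (hp : p.IsPath)
    (h : Ancestor T z y p.penultimate) : Ancestor T z p.penultimate x := by
  simpa [Walk.snd_reverse] using hp.reverse.ancestor_of_ancestor_snd hT (by simpa using h)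

theorem penultimate_ancestor_of_not_ancestor (hT : T.IsTree) (hp : p.IsPath)
    (h : ¬ Ancestor T z y x) : Ancestor T z p.penultimate y := by
  simpa [Walk.snd_reverse] using hp.reverse.snd_ancestor_of_not_ancestor hT h

/-- Once a path descends, it keeps descending. -/
theorem ancestor_getVert_succ_of_le (hT : T.IsTree) (hp : p.IsPath) {i j : ℕ}
    (hj : Ancestor T z (p.getVert j) (p.getVert (j + 1))) (hji : j ≤ i) (hi : i < p.length) :
    Ancestor T z (p.getVert i) (p.getVert (i + 1)) := by
  induction i, hji using Nat.le_induction with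
  | base => exact hj
  | succ i hji ih =>
    refine (related_of_adj hT (p.adj_getVert_succ hi)).resolve_right fun hup => ?_
    have hrepeat : p.getVert i = p.getVert (i + 2) :=
      parent_unique hT.isAcyclic (p.adj_getVert_succ (by omega)) (ih (by omega))
        (p.adj_getVert_succ hi).symm hup
    have := hp.getVert_injOn (by simp only [Set.mem_ofPred_eq]; omega)
      (by simp only [Set.mem_ofPred_eq]; omega) hrepeat
    omega

end SimpleGraph.Walk.IsPath

section Requests

variable {V : Type*} {T : SimpleGraph V} {z m : V} {r r' : Request T}

namespace Request

theorem not_nil (r : Request T) : ¬ r.toWalk.Nil :=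
  Walk.not_nil_iff_lt_length.2 r.one_le_length

theorem adj_sPlus (r : Request T) : T.Adj r.s r.sPlus := r.toWalk.adj_snd r.not_nil

theorem adj_tMinus (r : Request T) : T.Adj r.tMinus r.t := r.toWalk.adj_penultimate r.not_nil

end Request

namespace Converging

theorem sPlus_ancestor_s (hr : Converging T z r) : Ancestor T z r.sPlus r.s := by
  simpa [Request.sPlus] using hr 0 r.one_le_length

theorem t_ancestor_tMinus (hr : Converging T z r) : Ancestor T z r.t r.tMinus := by
  have h := hr (r.toWalk.length - 1) (by have := r.one_le_length; omega)
  rwa [Nat.sub_add_cancel r.one_le_length, Walk.getVert_length] at h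

theorem tMinus_ancestor_s (hT : T.IsTree) (hr : Converging T z r) :
    Ancestor T z r.tMinus r.s :=
  r.isPath.penultimate_ancestor_of_ancestor_penultimate hT hr.t_ancestor_tMinus

end Converging

namespace Unimodal

theorem sPlus_ancestor_s (hT : T.IsTree) (hr : Unimodal T z r) : Ancestor T z r.sPlus r.s :=
  (related_of_adj hT r.adj_sPlus).resolve_left fun hdown => hr.2 fun _ hi =>
    r.isPath.ancestor_getVert_succ_of_le hT (j := 0) (by simpa [Request.sPlus] using hdown)
      (Nat.zero_le _) hi

theorem tMinus_ancestor_t (hT : T.IsTree) (hr : Unimodal T z r) : Ancestor T z r.tMinus r.t := by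
  refine (related_of_adj hT r.adj_tMinus).resolve_right fun hup => hr.1 fun i hi => ?_
  refine (related_of_adj hT (r.toWalk.adj_getVert_succ hi)).resolve_left fun hdown => ?_
  have hlast := r.isPath.ancestor_getVert_succ_of_le hT hdown
    (Nat.le_sub_one_of_lt hi) (Nat.sub_one_lt_of_lt hi)
  rw [Nat.sub_add_cancel r.one_le_length, Walk.getVert_length] at hlast
  exact r.adj_tMinus.ne (hlast.antisymm hT.isAcyclic hup)

end Unimodal

theorem interferesOn_iff_tMinus_ancestor_s (hT : T.IsTree) (hs : Ancestor T z r.sPlus r.s)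
    (ht' : Ancestor T z r'.t r'.tMinus) : InterferesOn T r r' ↔ Ancestor T z r'.tMinus r.s := by
  constructor
  · rintro ⟨p, hp, -, -, hpen⟩
    have hpen : p.penultimate = r'.tMinus := hpen
    exact hpen ▸ hp.penultimate_ancestor_of_ancestor_penultimate hT (hpen ▸ ht')
  · intro h
    have hts : Ancestor T z r'.t r.s := ht'.trans hT.isAcyclic h
    have hne : ¬ Ancestor T z r.s r'.t := fun hst =>
      r'.adj_tMinus.ne ((h.trans hT.isAcyclic hst).antisymm hT.isAcyclic ht')
    obtain ⟨p, hp⟩ := (hT.existsUnique_path r.s r'.t).exists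
    have hnil : ¬ p.Nil := fun hnil => hne (hnil.eq ▸ ancestor_refl hT.connected z _)
    refine ⟨p, hp, Walk.not_nil_iff_lt_length.1 hnil, ?_, ?_⟩
    · exact parent_unique hT.isAcyclic (p.adj_snd hnil).symm
        (hp.snd_ancestor_of_not_ancestor hT hne) r.adj_sPlus.symm hs
    · have hpen : Ancestor T z r'.t p.penultimate := ancestor_of_mem_support_of_ancestor
        hT.isAcyclic hts (ancestor_refl hT.connected z _) hp (p.getVert_mem_support _)
      have hpen_s := hp.penultimate_ancestor_of_ancestor_penultimate hT hpen
      exact child_unique_of_related hT.isAcyclic (p.adj_penultimate hnil).symm hpen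
        r'.adj_tMinus.symm ht' (related_of_ancestor hT.isAcyclic hpen_s h)

theorem interferesOn_iff_not_related (hT : T.IsTree) (hs : Ancestor T z r.sPlus r.s)
    (ht' : Ancestor T z r'.tMinus r'.t) : InterferesOn T r r' ↔ ¬ Related T z r.s r'.t := by
  constructor
  · rintro ⟨p, hp, -, hsnd, hpen⟩ (hst | hts)
    · have h := ancestor_of_mem_support_of_ancestor hT.isAcyclic (ancestor_refl hT.connected z _)
        hst hp (p.getVert_mem_support 1)
      exact r.adj_sPlus.ne ((hsnd ▸ h).antisymm hT.isAcyclic hs)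
    · have h := ancestor_of_mem_support_of_ancestor hT.isAcyclic hts
        (ancestor_refl hT.connected z _) hp (p.getVert_mem_support (p.length - 1))
      exact r'.adj_tMinus.ne ((hpen ▸ h).antisymm hT.isAcyclic ht').symm
  · intro h
    obtain ⟨p, hp⟩ := (hT.existsUnique_path r.s r'.t).exists
    have hnil : ¬ p.Nil := fun hnil => h (Or.inl (hnil.eq ▸ ancestor_refl hT.connected z _))
    refine ⟨p, hp, Walk.not_nil_iff_lt_length.1 hnil, ?_, ?_⟩
    · exact parent_unique hT.isAcyclic (p.adj_snd hnil).symm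
        (hp.snd_ancestor_of_not_ancestor hT fun hst => h (Or.inl hst)) r.adj_sPlus.symm hs
    · exact parent_unique hT.isAcyclic (p.adj_penultimate hnil)
        (hp.penultimate_ancestor_of_not_ancestor hT fun hts => h (Or.inr hts)) r'.adj_tMinus ht'

theorem IsMiddle.ancestor_t_iff_not_tMinus_ancestor_s (hT : T.IsTree) (hm : IsMiddle T z r m)
    (ht : Ancestor T z r.tMinus r.t) (ht' : Ancestor T z r'.t r'.tMinus)
    (hts' : Ancestor T z r'.tMinus r'.s) (hrel : Related T z r.t r'.s) :
    Ancestor T z m r'.t ↔ ¬ Ancestor T z r'.tMinus r.s := by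
  have hmt : Ancestor T z m r.t := hm.2 _ r.toWalk.end_mem_support
  have hms : Ancestor T z m r.s := hm.2 _ r.toWalk.start_mem_support
  have hlca : ∀ {w}, Ancestor T z w r.s → Ancestor T z w r.t → Ancestor T z w m :=
    fun hws hwt => ancestor_of_mem_support_of_ancestor hT.isAcyclic hws hwt r.isPath hm.1
  constructor
  · intro hmt' hc
    rcases (related_comm.1 hrel).of_ancestor hT.isAcyclic hts' (ancestor_refl hT.connected z _)
      with hct | htc
    · have hcm := hlca hc hct
      exact r'.adj_tMinus.ne ((hcm.trans hT.isAcyclic hmt').antisymm hT.isAcyclic ht')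
    · have htm := hlca (htc.trans hT.isAcyclic hc) (ancestor_refl hT.connected z _)
      have htt := htm.trans hT.isAcyclic (hm.2 r.tMinus (r.toWalk.getVert_mem_support _))
      exact r.adj_tMinus.ne (ht.antisymm hT.isAcyclic htt)
  · intro hc
    rcases (related_comm.1 hrel).of_ancestor hT.isAcyclic hts' hmt with hcm | hmc
    · exact absurd (hcm.trans hT.isAcyclic hms) hc
    rcases eq_or_ancestor_of_adj hT.isAcyclic r'.adj_tMinus.symm ht' hmc with rfl | hmt'
    · exact absurd hms hc
    · exact hmt'

end Requests

/-- Lemma 1(v): a unimodal request `r` and a converging request `r'` do not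
interfere iff `m_r` is an ancestor of `t_{r'}` and `t_r` and `s_{r'}` are related. -/
theorem unimodal_conv_not_interfere_iff {V : Type*} (T : SimpleGraph V) (hT : T.IsTree)
    (z : V) (r r' : Request T) (m : V)
    (hr : Unimodal T z r) (hr' : Converging T z r')
    (hm : IsMiddle T z r m) :
    ¬ Interfere T r r' ↔ Ancestor T z m r'.t ∧ Related T z r.t r'.s := by
  have ht := hr.tMinus_ancestor_t hT
  rw [Interfere, not_or,
    interferesOn_iff_tMinus_ancestor_s hT (hr.sPlus_ancestor_s hT) hr'.t_ancestor_tMinus,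
    interferesOn_iff_not_related hT hr'.sPlus_ancestor_s ht, not_not, related_comm]
  exact and_congr_left fun hrel => (hm.ancestor_t_iff_not_tMinus_ancestor_s hT ht
    hr'.t_ancestor_tMinus (hr'.tMinus_ancestor_s hT) hrel).symm
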